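/- In the random-walk estimator with initial distribution q = d₀/‖d₀‖₁, the entrywise variances satisfy max_{i,j} Var[X_{ij}] ≤ ‖Ā₁⋯Ā_k‖_{∞,∞} · ‖Ā₁⋯Ā_k‖_{1,1}, and the trace of the covariance matrix satisfies Tr[Σ] = Σ_{ij} Var[X_{ij}] ≤ ‖Ā₁⋯Ā_k‖_{1,1}². -/

import Mathlib

open scoped BigOperators

/-- Left-to-right product A₀ A₁ ⋯ A_{m-1}. -/
noncomputable def leftProd (n : ℕ → ℕ)
    (A : ∀ ℓ : ℕ, Matrix (Fin (n ℓ)) (Fin (n (ℓ + 1))) ℝ) :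
    ∀ m : ℕ, Matrix (Fin (n 0)) (Fin (n m)) ℝ
  | 0 => 1
  | (m + 1) => leftProd n A m * A m

/-- sign(x) = 1 if x ≥ 0, −1 otherwise. -/
noncomputable def rwSign (x : ℝ) : ℝ := if 0 ≤ x then 1 else -1

/-- Probability of a path (j₀,…,j_k): q(j₀)·∏_ℓ |A'_ℓ|_{j_{ℓ-1} j_ℓ}. -/
noncomputable def pathProb (k : ℕ) (n : ℕ → ℕ)
    (A' : ∀ ℓ : ℕ, Matrix (Fin (n ℓ)) (Fin (n (ℓ + 1))) ℝ)
    (q : Fin (n 0) → ℝ) (ω : (ℓ : Fin (k + 1)) → Fin (n ℓ.val)) : ℝ :=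
  q (ω ⟨0, Nat.succ_pos k⟩) * ∏ ℓ : Fin k, |A' ℓ (ω ℓ.castSucc) (ω ℓ.succ)|

/-- The (i,j') entry of the random matrix
    X(j₀,…,j_k) = (d₀)_{j₀}/q_{j₀} · (∏ signs) · e_{j₀} e_{j_k}ᵀ. -/
noncomputable def pathX (k : ℕ) (n : ℕ → ℕ)
    (A' : ∀ ℓ : ℕ, Matrix (Fin (n ℓ)) (Fin (n (ℓ + 1))) ℝ)
    (d q : Fin (n 0) → ℝ) (i : Fin (n 0)) (j' : Fin (n k))
    (ω : (ℓ : Fin (k + 1)) → Fin (n ℓ.val)) : ℝ :=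
  d (ω ⟨0, Nat.succ_pos k⟩) / q (ω ⟨0, Nat.succ_pos k⟩) *
    (∏ ℓ : Fin k, rwSign (A' ℓ (ω ℓ.castSucc) (ω ℓ.succ))) *
    (if i = ω ⟨0, Nat.succ_pos k⟩ ∧ j' = ω ⟨k, Nat.lt_succ_self k⟩ then 1 else 0)

/-!
With `q = d / s`, `s = ∑ i, d i`, the importance weight `d_{j₀} / q_{j₀}` equals `s` wherever
`q_{j₀} ≠ 0` (elsewhere the path has weight `0`) and the signs square to `1`, so summing over
paths gives `E[X_{ij}²] = s · (diag d · |A'₁|⋯|A'_k|)_{ij}`. The rows of each `|A'_ℓ|` sum to `1`, hence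
`s` is the total entry sum of `M = diag d · |A'₁|⋯|A'_k|`. Dropping the squared mean, both bounds
follow from `|∑ M| ≤ ∑ |M|` and `|M_{ij}| ≤ max |M|`.
-/

open Finset Matrix

section PathSum

variable {n : ℕ → ℕ} (B : ∀ ℓ : ℕ, Matrix (Fin (n ℓ)) (Fin (n (ℓ + 1))) ℝ)

theorem sum_leftProd_eq_one {k : ℕ} (hB : ∀ ℓ < k, ∀ i, ∑ j, B ℓ i j = 1) (i : Fin (n 0)) :
    ∑ j, leftProd n B k i j = 1 := by
  induction k with
  | zero => simp [leftProd, Matrix.one_apply]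
  | succ k ih =>
    simp only [leftProd, Matrix.mul_apply]
    rw [Finset.sum_comm]
    simp only [← Finset.mul_sum, hB k k.lt_succ_self, mul_one]
    exact ih fun ℓ hℓ => hB ℓ (hℓ.trans k.lt_succ_self)

/-- Paths are split as `Fin.snoc w x`; the sum over the last vertex `x` is absorbed into the
test function, which is why the statement carries one. -/
theorem sum_paths_mul_eq_sum_leftProd_mul (k : ℕ) (i : Fin (n 0)) (f : Fin (n k) → ℝ) :
    ∑ ω : (ℓ : Fin (k + 1)) → Fin (n ℓ.val),
        (if i = ω ⟨0, k.succ_pos⟩ then (1 : ℝ) else 0) *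
          (∏ ℓ : Fin k, B ℓ (ω ℓ.castSucc) (ω ℓ.succ)) * f (ω ⟨k, k.lt_succ_self⟩) =
      ∑ j, leftProd n B k i j * f j := by
  induction k with
  | zero =>
    rw [← (Fin.consEquiv _).sum_comp, Fintype.sum_prod_type]
    simp [leftProd, Matrix.one_apply]
  | succ k ih =>
    rw [← (Fin.snocEquiv _).sum_comp, Fintype.sum_prod_type, Finset.sum_comm]
    have hfirst : ∀ (w : (ℓ : Fin (k + 1)) → Fin (n ℓ.val)) x,
        Fin.snoc (α := fun ℓ : Fin (k + 2) => Fin (n ℓ.val)) w x ⟨0, (k + 1).succ_pos⟩ =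
          w ⟨0, k.succ_pos⟩ :=
      fun w x => Fin.snoc_castSucc (i := ⟨0, k.succ_pos⟩) ..
    have hlast : ∀ (w : (ℓ : Fin (k + 1)) → Fin (n ℓ.val)) x,
        Fin.snoc (α := fun ℓ : Fin (k + 2) => Fin (n ℓ.val)) w x ⟨k + 1, (k + 1).lt_succ_self⟩ = x :=
      fun w x => Fin.snoc_last (α := fun ℓ : Fin (k + 2) => Fin (n ℓ.val)) ..
    simp only [Fin.snocEquiv_apply, hfirst, hlast, Fin.prod_univ_castSucc, Fin.snoc_castSucc,
      Fin.succ_castSucc, Fin.succ_last, Fin.snoc_last]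
    calc _ = ∑ w : (ℓ : Fin (k + 1)) → Fin (n ℓ.val),
          ((if i = w ⟨0, k.succ_pos⟩ then (1 : ℝ) else 0) *
            ∏ ℓ : Fin k, B ℓ (w ℓ.castSucc) (w ℓ.succ)) *
              ∑ x, B k (w (Fin.last k)) x * f x := by
          refine sum_congr rfl fun w _ => ?_
          rw [Finset.mul_sum]
          refine sum_congr rfl fun x _ => ?_
          simp only [mul_assoc]
          -- the factors `B ↑ℓ.castSucc` and `B ↑ℓ` only agree up to unfolding `Fin.castSucc`
          rfl
      _ = ∑ j, leftProd n B k i j * ∑ x, B k j x * f x := ih fun j => ∑ x, B k j x * f x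
      _ = ∑ x, leftProd n B (k + 1) i x * f x := by
          simp only [leftProd, Matrix.mul_apply, Finset.mul_sum, Finset.sum_mul, mul_assoc]
          exact Finset.sum_comm

theorem sum_paths_eq_leftProd (k : ℕ) (i : Fin (n 0)) (j : Fin (n k)) :
    ∑ ω : (ℓ : Fin (k + 1)) → Fin (n ℓ.val),
        (if i = ω ⟨0, k.succ_pos⟩ ∧ j = ω ⟨k, k.lt_succ_self⟩ then (1 : ℝ) else 0) *
          ∏ ℓ : Fin k, B ℓ (ω ℓ.castSucc) (ω ℓ.succ) =
      leftProd n B k i j := by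
  convert sum_paths_mul_eq_sum_leftProd_mul B k i (fun j' => if j = j' then 1 else 0) using 1
  · refine Finset.sum_congr rfl fun ω _ => ?_
    simp only [ite_and]
    split_ifs <;> simp
  · simp

end PathSum

theorem rwSign_sq (x : ℝ) : rwSign x ^ 2 = 1 := by
  unfold rwSign
  split_ifs <;> norm_num

/-- The importance weight `a / (a / s)` is `s` except where it is the junk value `0`, and then
the prefactor `a / s` vanishes as well. -/
theorem div_mul_div_div_sq (a s : ℝ) : a / s * (a / (a / s)) ^ 2 = a * s := by
  rcases eq_or_ne a 0 with rfl | ha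
  · simp
  rcases eq_or_ne s 0 with rfl | hs
  · simp
  field_simp

section Estimator

variable (k : ℕ) (n : ℕ → ℕ) (A' : ∀ ℓ : ℕ, Matrix (Fin (n ℓ)) (Fin (n (ℓ + 1))) ℝ)
  (d : Fin (n 0) → ℝ) (s : ℝ)

theorem pathProb_mul_pathX_sq (i : Fin (n 0)) (j : Fin (n k))
    (ω : (ℓ : Fin (k + 1)) → Fin (n ℓ.val)) :
    pathProb k n A' (fun i' => d i' / s) ω * pathX k n A' d (fun i' => d i' / s) i j ω ^ 2 =
      s * d i * ((if i = ω ⟨0, k.succ_pos⟩ ∧ j = ω ⟨k, k.lt_succ_self⟩ then (1 : ℝ) else 0) *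
        ∏ ℓ : Fin k, |A' ℓ (ω ℓ.castSucc) (ω ℓ.succ)|) := by
  unfold pathProb pathX
  by_cases h : i = ω ⟨0, k.succ_pos⟩ ∧ j = ω ⟨k, k.lt_succ_self⟩
  · have hsign : (∏ ℓ : Fin k, rwSign (A' ℓ (ω ℓ.castSucc) (ω ℓ.succ))) ^ 2 = 1 := by
      simp only [← Finset.prod_pow, rwSign_sq, Finset.prod_const_one]
    rw [if_pos h, ← h.1, mul_one, mul_pow, hsign, mul_one, mul_right_comm, div_mul_div_div_sq]
    ring
  · rw [if_neg h]
    simp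

theorem sum_pathProb_mul_pathX_sq (i : Fin (n 0)) (j : Fin (n k)) :
    ∑ ω : (ℓ : Fin (k + 1)) → Fin (n ℓ.val),
        pathProb k n A' (fun i' => d i' / s) ω * pathX k n A' d (fun i' => d i' / s) i j ω ^ 2 =
      s * (diagonal d * leftProd n (fun ℓ => (A' ℓ).map (fun x => |x|)) k) i j := by
  simp only [pathProb_mul_pathX_sq, diagonal_mul, ← sum_paths_eq_leftProd, Matrix.map_apply,
    Finset.mul_sum, mul_assoc]

end Estimator

theorem sum_diagonal_mul_eq_sum {m p : Type*} [Fintype m] [Fintype p] [DecidableEq m]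
    (d : m → ℝ) (P : Matrix m p ℝ) (hP : ∀ i, ∑ j, P i j = 1) :
    ∑ i, ∑ j, (diagonal d * P) i j = ∑ i, d i := by
  simp only [diagonal_mul, ← Finset.mul_sum, hP, mul_one]

section EntrySum

variable {m p : Type*} [Fintype m] [Fintype p] (M : Matrix m p ℝ)

theorem sum_entries_mul_le_iSup_abs_mul_sum_abs (i : m) (j : p) :
    (∑ i', ∑ j', M i' j') * M i j ≤ (⨆ i', ⨆ j', |M i' j'|) * ∑ i', ∑ j', |M i' j'| := by
  have hentry : |M i j| ≤ ⨆ i', ⨆ j', |M i' j'| :=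
    (le_ciSup (Finite.bddAbove_range fun j' => |M i j'|) j).trans
      (le_ciSup (Finite.bddAbove_range fun i' => ⨆ j', |M i' j'|) i)
  have htotal : |∑ i', ∑ j', M i' j'| ≤ ∑ i', ∑ j', |M i' j'| :=
    (abs_sum_le_sum_abs _ _).trans (sum_le_sum fun i' _ => abs_sum_le_sum_abs _ _)
  calc (∑ i', ∑ j', M i' j') * M i j ≤ |∑ i', ∑ j', M i' j'| * |M i j| := by
        rw [← abs_mul]; exact le_abs_self _
    _ ≤ (∑ i', ∑ j', |M i' j'|) * ⨆ i', ⨆ j', |M i' j'| :=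
        mul_le_mul htotal hentry (abs_nonneg _) (by positivity)
    _ = _ := mul_comm _ _

theorem sum_sum_entries_mul_le_sq_sum_abs :
    ∑ i, ∑ j, (∑ i', ∑ j', M i' j') * M i j ≤ (∑ i', ∑ j', |M i' j'|) ^ 2 := by
  have htotal : |∑ i', ∑ j', M i' j'| ≤ ∑ i', ∑ j', |M i' j'| :=
    (abs_sum_le_sum_abs _ _).trans (sum_le_sum fun i' _ => abs_sum_le_sum_abs _ _)
  simp only [← Finset.mul_sum]
  rw [← sq, ← sq_abs]
  exact pow_le_pow_left₀ (abs_nonneg _) htotal 2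

end EntrySum

theorem random_walk_estimator_variance_l1_sampling_general (k : ℕ) (n : ℕ → ℕ)
    (A' : ∀ ℓ : ℕ, Matrix (Fin (n ℓ)) (Fin (n (ℓ + 1))) ℝ)
    (hrow : ∀ ℓ < k, ∀ i, ∑ j, |A' ℓ i j| = 1)
    (d : Fin (n 0) → ℝ) :
    (∀ (i : Fin (n 0)) (j' : Fin (n k)),
      (∑ ω : (ℓ : Fin (k + 1)) → Fin (n ℓ.val),
          pathProb k n A' (fun i' => d i' / ∑ i'', d i'') ω *
            (pathX k n A' d (fun i' => d i' / ∑ i'', d i'') i j' ω) ^ 2) -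
        (∑ ω : (ℓ : Fin (k + 1)) → Fin (n ℓ.val),
            pathProb k n A' (fun i' => d i' / ∑ i'', d i'') ω *
              pathX k n A' d (fun i' => d i' / ∑ i'', d i'') i j' ω) ^ 2 ≤
      (⨆ i', ⨆ j'',
          |(Matrix.diagonal d * leftProd n (fun ℓ => (A' ℓ).map (fun x => |x|)) k) i' j''|) *
        ∑ i', ∑ j'',
          |(Matrix.diagonal d * leftProd n (fun ℓ => (A' ℓ).map (fun x => |x|)) k) i' j''|) ∧
    (∑ i : Fin (n 0), ∑ j' : Fin (n k),
        ((∑ ω : (ℓ : Fin (k + 1)) → Fin (n ℓ.val),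
            pathProb k n A' (fun i' => d i' / ∑ i'', d i'') ω *
              (pathX k n A' d (fun i' => d i' / ∑ i'', d i'') i j' ω) ^ 2) -
          (∑ ω : (ℓ : Fin (k + 1)) → Fin (n ℓ.val),
              pathProb k n A' (fun i' => d i' / ∑ i'', d i'') ω *
                pathX k n A' d (fun i' => d i' / ∑ i'', d i'') i j' ω) ^ 2)) ≤
      (∑ i', ∑ j'',
          |(Matrix.diagonal d * leftProd n (fun ℓ => (A' ℓ).map (fun x => |x|)) k) i' j''|) ^ 2 := by
  set M := diagonal d * leftProd n (fun ℓ => (A' ℓ).map (fun x => |x|)) k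
  have hmass : ∑ i, d i = ∑ i, ∑ j, M i j :=
    (sum_diagonal_mul_eq_sum d _ (sum_leftProd_eq_one _ hrow)).symm
  have hvar : ∀ i j,
      (∑ ω : (ℓ : Fin (k + 1)) → Fin (n ℓ.val),
          pathProb k n A' (fun i' => d i' / ∑ i'', d i'') ω *
            (pathX k n A' d (fun i' => d i' / ∑ i'', d i'') i j ω) ^ 2) -
        (∑ ω : (ℓ : Fin (k + 1)) → Fin (n ℓ.val),
            pathProb k n A' (fun i' => d i' / ∑ i'', d i'') ω *
              pathX k n A' d (fun i' => d i' / ∑ i'', d i'') i j ω) ^ 2 ≤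
        (∑ i', ∑ j', M i' j') * M i j := fun i j =>
    (sub_le_self _ (sq_nonneg _)).trans_eq (by rw [sum_pathProb_mul_pathX_sq, hmass])
  exact ⟨fun i j => (hvar i j).trans (sum_entries_mul_le_iSup_abs_mul_sum_abs M i j),
    (sum_le_sum fun i _ => sum_le_sum fun j _ => hvar i j).trans
      (sum_sum_entries_mul_le_sq_sum_abs M)⟩

/-- Random walk estimator with q = d₀/‖d₀‖₁:
    max entrywise variance ≤ ‖Ā₁⋯Ā_k‖_{∞,∞}·‖Ā₁⋯Ā_k‖_{1,1} and
    Tr[Σ] = Σ_{ij} Var[X_{ij}] ≤ ‖Ā₁⋯Ā_k‖_{1,1}², where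
    Ā₁⋯Ā_k = diag(d₀)·|A'₁|⋯|A'_k|. -/
theorem random_walk_estimator_variance_l1_sampling (k : ℕ) (n : ℕ → ℕ)
    (A' : ∀ ℓ : ℕ, Matrix (Fin (n ℓ)) (Fin (n (ℓ + 1))) ℝ)
    (hrow : ∀ ℓ < k, ∀ i, ∑ j, |A' ℓ i j| = 1)
    (d : Fin (n 0) → ℝ) (hd : ∀ i, 0 ≤ d i) (hSum : 0 < ∑ i, d i) :
    (∀ (i : Fin (n 0)) (j' : Fin (n k)),
      (∑ ω : (ℓ : Fin (k + 1)) → Fin (n ℓ.val),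
          pathProb k n A' (fun i' => d i' / ∑ i'', d i'') ω *
            (pathX k n A' d (fun i' => d i' / ∑ i'', d i'') i j' ω) ^ 2) -
        (∑ ω : (ℓ : Fin (k + 1)) → Fin (n ℓ.val),
            pathProb k n A' (fun i' => d i' / ∑ i'', d i'') ω *
              pathX k n A' d (fun i' => d i' / ∑ i'', d i'') i j' ω) ^ 2 ≤
      (⨆ i', ⨆ j'',
          |(Matrix.diagonal d * leftProd n (fun ℓ => (A' ℓ).map (fun x => |x|)) k) i' j''|) *
        ∑ i', ∑ j'',
          |(Matrix.diagonal d * leftProd n (fun ℓ => (A' ℓ).map (fun x => |x|)) k) i' j''|) ∧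
    (∑ i : Fin (n 0), ∑ j' : Fin (n k),
        ((∑ ω : (ℓ : Fin (k + 1)) → Fin (n ℓ.val),
            pathProb k n A' (fun i' => d i' / ∑ i'', d i'') ω *
              (pathX k n A' d (fun i' => d i' / ∑ i'', d i'') i j' ω) ^ 2) -
          (∑ ω : (ℓ : Fin (k + 1)) → Fin (n ℓ.val),
              pathProb k n A' (fun i' => d i' / ∑ i'', d i'') ω *
                pathX k n A' d (fun i' => d i' / ∑ i'', d i'') i j' ω) ^ 2)) ≤
      (∑ i', ∑ j'',
          |(Matrix.diagonal d * leftProd n (fun ℓ => (A' ℓ).map (fun x => |x|)) k) i' j''|) ^ 2 :=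
  random_walk_estimator_variance_l1_sampling_general k n A' hrow d
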